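/- arXiv:1412.1585 — 4 statements merged into one kernel-verified Lean document; each statement's English description precedes it below -/
import Mathlib

section
/- Let Φ : ℝ → ℝ be the continuous piecewise linear function with Φ(0) = 0 whose slope on the interval [2π(k−1), 2πk] equals k for every integer k. Then for all real t and every integer k, Φ(t + 2πk) − Φ(t) = πk² + tk + πk. -/
/-!
On each period the slope grows by one, so `Φ (t + p) - Φ t = t + p` for every `t`; summing these
one-period increments along `t, t + p, …, t + p k` gives the quadratic formula.
-/

section Staircase

variable {Φ : ℝ → ℝ} {p : ℝ}

lemma sub_period_eq_of_slope_eq_int (hp : 0 < p)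
    (hslope : ∀ k : ℤ, ∀ t ∈ Set.Icc (p * ((k : ℝ) - 1)) (p * (k : ℝ)),
      Φ t = Φ (p * ((k : ℝ) - 1)) + (k : ℝ) * (t - p * ((k : ℝ) - 1)))
    (t : ℝ) : Φ (t + p) - Φ t = t + p := by
  set k : ℤ := ⌈t / p⌉
  have hk_le : t ≤ p * k := by
    have := Int.le_ceil (t / p)
    rw [div_le_iff₀ hp] at this
    linarith
  have hk_gt : p * (k - 1) < t := by
    have : (k : ℝ) - 1 < t / p := by linarith [Int.ceil_lt_add_one (t / p)]
    rw [lt_div_iff₀ hp] at this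
    linarith
  have hΦt := hslope k t ⟨hk_gt.le, hk_le⟩
  have hΦtp := hslope (k + 1) (t + p) (by push_cast; constructor <;> linarith)
  have hΦk := hslope k (p * k) ⟨by linarith, le_rfl⟩
  push_cast at hΦtp
  rw [add_sub_cancel_right] at hΦtp
  rw [hΦt, hΦtp, hΦk]
  ring

lemma sub_int_mul_period_eq_of_sub_period_eq (h : ∀ t, Φ (t + p) - Φ t = t + p)
    (t : ℝ) (k : ℤ) : Φ (t + p * k) - Φ t = p * k * (k + 1) / 2 + t * k := by
  induction k using Int.induction_on with
  | zero => simp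
  | succ n ih =>
    have step := h (t + p * n)
    push_cast at ih ⊢
    rw [show t + p * n + p = t + p * (n + 1) by ring] at step
    linear_combination step + ih
  | pred n ih =>
    have step := h (t + p * (-n - 1))
    push_cast at ih ⊢
    rw [show t + p * (-n - 1) + p = t + p * -n by ring] at step
    linear_combination ih - step

end Staircase

theorem stmt_0_general (Φ : ℝ → ℝ)
    (hslope : ∀ k : ℤ, ∀ t ∈ Set.Icc (2 * Real.pi * ((k : ℝ) - 1)) (2 * Real.pi * (k : ℝ)),
      Φ t = Φ (2 * Real.pi * ((k : ℝ) - 1)) + (k : ℝ) * (t - 2 * Real.pi * ((k : ℝ) - 1))) :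
    ∀ (t : ℝ) (k : ℤ),
      Φ (t + 2 * Real.pi * (k : ℝ)) - Φ t
        = Real.pi * (k : ℝ) ^ 2 + t * (k : ℝ) + Real.pi * (k : ℝ) := by
  intro t k
  have hperiod := sub_period_eq_of_slope_eq_int (by positivity) hslope
  rw [sub_int_mul_period_eq_of_sub_period_eq hperiod t k]
  ring

/-- If `Φ : ℝ → ℝ` is continuous, `Φ 0 = 0`, and `Φ` is affine with slope `k`
on each interval `[2π(k-1), 2πk]` for `k ∈ ℤ`, then
`Φ (t + 2πk) - Φ t = πk² + tk + πk` for all real `t` and integers `k`. -/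
theorem stmt_0 (Φ : ℝ → ℝ) (hcont : Continuous Φ) (h0 : Φ 0 = 0)
    (hslope : ∀ k : ℤ, ∀ t ∈ Set.Icc (2 * Real.pi * ((k : ℝ) - 1)) (2 * Real.pi * (k : ℝ)),
      Φ t = Φ (2 * Real.pi * ((k : ℝ) - 1)) + (k : ℝ) * (t - 2 * Real.pi * ((k : ℝ) - 1))) :
    ∀ (t : ℝ) (k : ℤ),
      Φ (t + 2 * Real.pi * (k : ℝ)) - Φ t
        = Real.pi * (k : ℝ) ^ 2 + t * (k : ℝ) + Real.pi * (k : ℝ) :=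
  stmt_0_general Φ hslope
end

section
/- Let Δ be the convex hull of a finite set A ⊂ ℤⁿ, let Σ and Σ′ be two distinct faces of Δ (of dimension less than dim Δ), and for ε > 0 let N_Σ^ε = {x ∈ N_Σ : x·(α − α′) ≥ ε|x||α − α′| for all α ∈ Σ ∩ A and all α′ ∈ A \ Σ}, where N_Σ is the normal cone of Σ. Then N_Σ^ε ∩ N_{Σ′}^ε = {0} for every ε > 0. -/
open scoped RealInnerProductSpace

/-- The normal cone of a subset `F` of a convex body `Δ` in Euclidean space:
`N_F = {x : x·(y - y') ≥ 0 for all y ∈ F, y' ∈ Δ}`. -/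
def normalCone (n : ℕ) (Δ F : Set (EuclideanSpace ℝ (Fin n))) :
    Set (EuclideanSpace ℝ (Fin n)) :=
  {x | ∀ y ∈ F, ∀ y' ∈ Δ, 0 ≤ ⟪x, y - y'⟫}

/-- The truncated cone `N_F^ε`:
`{x ∈ N_F : x·(α - α') ≥ ε|x||α - α'| for all α ∈ F ∩ A, α' ∈ A \ F}`. -/
def normalConeEps (n : ℕ) (A Δ F : Set (EuclideanSpace ℝ (Fin n))) (ε : ℝ) :
    Set (EuclideanSpace ℝ (Fin n)) :=
  {x ∈ normalCone n Δ F |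
    ∀ α ∈ F ∩ A, ∀ α' ∈ A \ F, ε * ‖x‖ * ‖α - α'‖ ≤ ⟪x, α - α'⟫}

lemma face_inter_nonempty {n : ℕ} (A : Finset (EuclideanSpace ℝ (Fin n)))
    (F : Set (EuclideanSpace ℝ (Fin n)))
    (hF : IsExposed ℝ (convexHull ℝ (A : Set (EuclideanSpace ℝ (Fin n)))) F)
    (hFne : F.Nonempty) : ∃ a ∈ A, a ∈ F := by
  obtain ⟨l, hl⟩ := hF hFne
  have hAne : A.Nonempty := by
    rw [← Finset.coe_nonempty, ← convexHull_nonempty_iff (𝕜 := ℝ)]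
    exact hFne.mono hF.subset
  obtain ⟨a₀, ha₀A, ha₀⟩ := A.exists_max_image (fun a => l a) hAne
  refine ⟨a₀, ha₀A, ?_⟩
  rw [hl]
  refine ⟨subset_convexHull ℝ _ ha₀A, ?_⟩
  intro y hy
  have : convexHull ℝ (A : Set (EuclideanSpace ℝ (Fin n))) ⊆ {z | l z ≤ l a₀} := by
    apply convexHull_min _ (convex_halfSpace_le (IsLinearMap.mk l.map_add l.map_smul) _)
    intro a ha; exact ha₀ a ha
  exact this hy

lemma face_eq_hull {n : ℕ} (A : Finset (EuclideanSpace ℝ (Fin n)))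
    (F : Set (EuclideanSpace ℝ (Fin n)))
    (hF : IsExposed ℝ (convexHull ℝ (A : Set (EuclideanSpace ℝ (Fin n)))) F)
    (hFne : F.Nonempty) :
    F = convexHull ℝ (F ∩ (A : Set (EuclideanSpace ℝ (Fin n)))) := by
  classical
  obtain ⟨l, hl⟩ := hF hFne
  apply Set.Subset.antisymm
  · intro p hp
    have hp' := hp
    rw [hl] at hp'
    obtain ⟨hpΔ, hmax⟩ := hp'
    rw [Finset.convexHull_eq] at hpΔ
    obtain ⟨w, hw0, hw1, hwp⟩ := hpΔ
    have hps : p = ∑ a ∈ A, w a • a := by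
      rw [← hwp, Finset.centerMass_eq_of_sum_1 _ _ hw1]; rfl
    have hlp : l p = ∑ a ∈ A, w a * l a := by
      rw [hps, map_sum]; simp [map_smul, smul_eq_mul]
    have hzero : ∀ a ∈ A, w a * (l p - l a) = 0 := by
      rw [← Finset.sum_eq_zero_iff_of_nonneg]
      · simp only [mul_sub]
        rw [Finset.sum_sub_distrib, ← Finset.sum_mul, hw1, one_mul, ← hlp, sub_self]
      · intro a ha
        apply mul_nonneg (hw0 a ha)
        have : l a ≤ l p := hmax a (subset_convexHull ℝ _ ha)
        linarith
    set t := A.filter (fun a => w a ≠ 0) with ht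
    have hsum : ∑ a ∈ t, w a = 1 := by
      rw [ht, Finset.sum_filter_ne_zero]; exact hw1
    have hmem : ∀ a ∈ t, a ∈ F ∩ (A : Set (EuclideanSpace ℝ (Fin n))) := by
      intro a hat
      rw [ht, Finset.mem_filter] at hat
      obtain ⟨haA, haw⟩ := hat
      have hla : l a = l p := by
        have := hzero a haA
        rcases mul_eq_zero.mp this with h | h
        · exact absurd h haw
        · linarith
      refine ⟨?_, haA⟩
      rw [hl]
      exact ⟨subset_convexHull ℝ _ haA, fun y hy => hla ▸ hmax y hy⟩
    have hcm : t.centerMass w id = p := by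
      rw [ht]
      have := Finset.centerMass_filter_ne_zero (t := A) (w := w) (z := (id : _ → EuclideanSpace ℝ (Fin n)))
      rw [this, hwp]
    rw [← hcm]
    exact Finset.centerMass_mem_convexHull t (fun a ha => hw0 a (Finset.mem_filter.mp ha).1)
      (by rw [hsum]; norm_num) hmem
  · apply convexHull_min Set.inter_subset_left
    exact hF.convex (convex_convexHull ℝ _)

lemma key {n : ℕ} (A Δ F F' : Set (EuclideanSpace ℝ (Fin n))) (hΔ : A ⊆ Δ)
    (ε : ℝ) (hε : 0 < ε) (x : EuclideanSpace ℝ (Fin n)) (hx : x ≠ 0)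
    (hxF : x ∈ normalConeEps n A Δ F ε) (hxF' : x ∈ normalConeEps n A Δ F' ε)
    (α : EuclideanSpace ℝ (Fin n)) (hαA : α ∈ A) (hαF : α ∈ F) (hαF' : α ∉ F')
    (β : EuclideanSpace ℝ (Fin n)) (hβA : β ∈ A) (hβF' : β ∈ F') : False := by
  have hne : β ≠ α := fun h => hαF' (h ▸ hβF')
  have hnorm : 0 < ‖β - α‖ := by
    rw [norm_pos_iff]; exact sub_ne_zero.mpr hne
  have hxnorm : 0 < ‖x‖ := norm_pos_iff.mpr hx
  have h1 : ε * ‖x‖ * ‖β - α‖ ≤ ⟪x, β - α⟫ := hxF'.2 β ⟨hβF', hβA⟩ α ⟨hαA, hαF'⟩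
  have pos : 0 < ε * ‖x‖ * ‖β - α‖ := by positivity
  rw [inner_sub_right] at h1
  by_cases hβF : β ∈ F
  · have h2 := hxF.1 α hαF β (hΔ hβA)
    rw [inner_sub_right] at h2
    linarith
  · have h3 := hxF.2 α ⟨hαF, hαA⟩ β ⟨hβA, hβF⟩
    have pos3 : 0 < ε * ‖x‖ * ‖α - β‖ := by
      rw [norm_sub_rev]; exact pos
    rw [inner_sub_right] at h3
    linarith


/-- For `Δ` the convex hull of a finite set `A ⊂ ℤⁿ` and two distinct proper
(exposed) faces `F ≠ F'` of `Δ`, the truncated normal cones satisfy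
`N_F^ε ∩ N_{F'}^ε = {0}` for every `ε > 0`. -/
theorem stmt_4 (n : ℕ) (A : Finset (EuclideanSpace ℝ (Fin n)))
    (hA : ∀ a ∈ A, ∀ i, ∃ m : ℤ, a i = (m : ℝ))
    (F F' : Set (EuclideanSpace ℝ (Fin n)))
    (hF : IsExposed ℝ (convexHull ℝ (A : Set (EuclideanSpace ℝ (Fin n)))) F)
    (hF' : IsExposed ℝ (convexHull ℝ (A : Set (EuclideanSpace ℝ (Fin n)))) F')
    (hFne : F.Nonempty) (hF'ne : F'.Nonempty)
    (hFproper : F ≠ convexHull ℝ (A : Set (EuclideanSpace ℝ (Fin n))))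
    (hF'proper : F' ≠ convexHull ℝ (A : Set (EuclideanSpace ℝ (Fin n))))
    (hne : F ≠ F') :
    ∀ ε > (0 : ℝ),
      normalConeEps n (A : Set (EuclideanSpace ℝ (Fin n)))
          (convexHull ℝ (A : Set (EuclideanSpace ℝ (Fin n)))) F ε ∩
        normalConeEps n (A : Set (EuclideanSpace ℝ (Fin n)))
          (convexHull ℝ (A : Set (EuclideanSpace ℝ (Fin n)))) F' ε = {0} := by
  intro ε hε
  apply Set.Subset.antisymm
  · rintro x ⟨hx1, hx2⟩
    rw [Set.mem_singleton_iff]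
    by_contra hx0
    have hΔ : (A : Set (EuclideanSpace ℝ (Fin n))) ⊆ convexHull ℝ (A : Set (EuclideanSpace ℝ (Fin n))) :=
      subset_convexHull ℝ _
    have hdiff : ¬ ((∀ a ∈ A, a ∈ F → a ∈ F') ∧ (∀ a ∈ A, a ∈ F' → a ∈ F)) := by
      rintro ⟨h1, h2⟩
      apply hne
      rw [face_eq_hull A F hF hFne, face_eq_hull A F' hF' hF'ne]
      congr 1
      ext a
      exact ⟨fun ⟨h, ha⟩ => ⟨h1 a ha h, ha⟩, fun ⟨h, ha⟩ => ⟨h2 a ha h, ha⟩⟩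
    rw [not_and_or] at hdiff
    push_neg at hdiff
    rcases hdiff with h | h
    · obtain ⟨α, hαA, hαF, hαF'⟩ := h
      obtain ⟨β, hβA, hβF'⟩ := face_inter_nonempty A F' hF' hF'ne
      exact key _ _ F F' hΔ ε hε x hx0 hx1 hx2 α hαA hαF hαF' β hβA hβF'
    · obtain ⟨α, hαA, hαF', hαF⟩ := h
      obtain ⟨β, hβA, hβF⟩ := face_inter_nonempty A F hF hFne
      exact key _ _ F' F hΔ ε hε x hx0 hx2 hx1 α hαA hαF' hαF β hβA hβF
  · intro x hx
    rw [Set.mem_singleton_iff] at hx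
    subst hx
    constructor <;>
      exact ⟨fun y _ y' _ => by simp, fun a _ a' _ => by simp⟩
end

section
/- Let φ : ℝⁿ → ℝ be convex with Legendre transform φ̂(η) = sup_y (η·y − φ(y)), assumed finite everywhere, and suppose S is an invertible symmetric n×n matrix such that y ↦ φ(y) − yᵀSy is 2πℤⁿ-periodic. Then for every ℓ ∈ ℤⁿ and v = 4πSℓ, one has φ̂(η + v) − φ̂(η) = (η+v)ᵀ(4S)⁻¹(η+v) − ηᵀ(4S)⁻¹η for all η ∈ ℝⁿ; that is, η ↦ φ̂(η) − ηᵀ(4S)⁻¹η is periodic with respect to the lattice generated by the columns of 4πS. -/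
open Matrix

/-- Let `φ : ℝⁿ → ℝ` be convex with everywhere-finite Legendre transform `φ̂`,
and `S` an invertible symmetric matrix with `y ↦ φ(y) - yᵀSy` `2πℤⁿ`-periodic. Then for
`ℓ ∈ ℤⁿ` and `v = 4πSℓ`,
`φ̂(η+v) - φ̂(η) = (η+v)ᵀ(4S)⁻¹(η+v) - ηᵀ(4S)⁻¹η` for all `η`. -/
theorem stmt_11 (n : ℕ) (φ : (Fin n → ℝ) → ℝ)
    (hφ : ConvexOn ℝ Set.univ φ)
    (S : Matrix (Fin n) (Fin n) ℝ) (hsymm : S.IsSymm) (hinv : IsUnit S.det)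
    (hper : ∀ (y : Fin n → ℝ) (ℓ : Fin n → ℤ),
      φ (y + fun i => 2 * Real.pi * (ℓ i : ℝ)) -
          (y + fun i => 2 * Real.pi * (ℓ i : ℝ)) ⬝ᵥ
            S.mulVec (y + fun i => 2 * Real.pi * (ℓ i : ℝ))
        = φ y - y ⬝ᵥ S.mulVec y)
    (φhat : (Fin n → ℝ) → ℝ)
    (hφhat : ∀ η : Fin n → ℝ,
      IsLUB (Set.range fun y : Fin n → ℝ => η ⬝ᵥ y - φ y) (φhat η)) :
    ∀ (ℓ : Fin n → ℤ) (η : Fin n → ℝ),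
      φhat (η + (4 * Real.pi) • S.mulVec (fun i => (ℓ i : ℝ))) - φhat η
        = (η + (4 * Real.pi) • S.mulVec (fun i => (ℓ i : ℝ))) ⬝ᵥ
            ((4 : ℝ) • S)⁻¹.mulVec (η + (4 * Real.pi) • S.mulVec (fun i => (ℓ i : ℝ)))
          - η ⬝ᵥ ((4 : ℝ) • S)⁻¹.mulVec η := by
  intro ℓ η
  -- symmetric dot product swap
  have hswap : ∀ (A : Matrix (Fin n) (Fin n) ℝ), A.IsSymm →
      ∀ x y : Fin n → ℝ, x ⬝ᵥ A.mulVec y = y ⬝ᵥ A.mulVec x := by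
    intro A hA x y
    rw [Matrix.dotProduct_mulVec, ← Matrix.mulVec_transpose, hA.eq, dotProduct_comm]
  set t : Fin n → ℝ := fun i => 2 * Real.pi * (ℓ i : ℝ) with ht
  set v : Fin n → ℝ := (4 * Real.pi) • S.mulVec (fun i => (ℓ i : ℝ)) with hv
  have hvt : v = (2:ℝ) • S.mulVec t := by
    rw [hv, ht]
    have : (fun i => 2 * Real.pi * (ℓ i : ℝ)) = (2 * Real.pi) • (fun i => (ℓ i : ℝ)) := by
      funext i; simp [smul_eq_mul]
    rw [this, Matrix.mulVec_smul, smul_smul]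
    norm_num; ring_nf
  set c : ℝ := η ⬝ᵥ t + t ⬝ᵥ S.mulVec t with hc
  -- pointwise identity
  have key : ∀ y : Fin n → ℝ, (η + v) ⬝ᵥ (y + t) - φ (y + t) = (η ⬝ᵥ y - φ y) + c := by
    intro y
    have hp := hper y ℓ
    have hφyt : φ (y + t) = φ y - y ⬝ᵥ S.mulVec y + (y + t) ⬝ᵥ S.mulVec (y + t) := by
      rw [ht]; linarith [hp]
    rw [hφyt, hvt, hc]
    have h1 : ((2:ℝ) • S.mulVec t) ⬝ᵥ y = 2 * (y ⬝ᵥ S.mulVec t) := by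
      rw [smul_dotProduct, smul_eq_mul, dotProduct_comm]
    have h2 : ((2:ℝ) • S.mulVec t) ⬝ᵥ t = 2 * (t ⬝ᵥ S.mulVec t) := by
      rw [smul_dotProduct, smul_eq_mul, dotProduct_comm]
    simp only [add_dotProduct, dotProduct_add, Matrix.mulVec_add] at *
    have hyt : t ⬝ᵥ S.mulVec y = y ⬝ᵥ S.mulVec t := hswap S hsymm t y
    linarith [h1, h2, hyt]
  -- LUB shift
  have hlub : IsLUB (Set.range fun y : Fin n → ℝ => (η + v) ⬝ᵥ y - φ y) (φhat η + c) := by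
    constructor
    · rintro z ⟨y, rfl⟩
      have hk := key (y - t)
      rw [sub_add_cancel] at hk
      simp only []
      rw [hk]
      have h0 := (hφhat η).1 ⟨y - t, rfl⟩
      simp only [] at h0
      linarith
    · intro b hb
      have : ∀ y : Fin n → ℝ, η ⬝ᵥ y - φ y ≤ b - c := by
        intro y
        have h1 := hb ⟨y + t, rfl⟩
        have h2 := key y
        simp only at h1 h2
        linarith
      have := (hφhat η).2 (by rintro z ⟨y, rfl⟩; exact this y)
      linarith
  have heq : φhat (η + v) = φhat η + c := (hφhat (η + v)).unique hlub
  -- compute RHS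
  have h4 : Invertible (4:ℝ) := invertibleOfNonzero (by norm_num)
  have hMinv : ((4:ℝ) • S)⁻¹ = (4⁻¹:ℝ) • S⁻¹ := by
    have h := Matrix.inv_smul (4:ℝ) hinv (A := S)
    rw [invOf_eq_inv] at h; exact h
  have hMsymm : (((4:ℝ) • S)⁻¹).IsSymm := by
    rw [hMinv]
    have hs : (S⁻¹).IsSymm := by
      unfold Matrix.IsSymm
      rw [Matrix.transpose_nonsing_inv, hsymm.eq]
    exact hs.smul _
  have hMv : ((4:ℝ) • S)⁻¹.mulVec v = (2⁻¹:ℝ) • t := by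
    rw [hMinv, hvt, Matrix.mulVec_smul, Matrix.smul_mulVec, smul_smul,
      Matrix.mulVec_mulVec, Matrix.nonsing_inv_mul S hinv, Matrix.one_mulVec]
    norm_num
  rw [heq]
  have hvM : v ⬝ᵥ ((4:ℝ) • S)⁻¹.mulVec η = η ⬝ᵥ ((4:ℝ) • S)⁻¹.mulVec v :=
    hswap _ hMsymm v η
  have hvt2 : v ⬝ᵥ t = 2 * (t ⬝ᵥ S.mulVec t) := by
    rw [hvt, smul_dotProduct, smul_eq_mul, dotProduct_comm]
  rw [Matrix.mulVec_add, dotProduct_add, add_dotProduct,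
    add_dotProduct, hvM, hMv]
  simp only [dotProduct_smul, smul_eq_mul]
  rw [hc]
  linarith [hvt2]
end

section
/- Let β ∈ ℤⁿ be nonzero and b ∈ ℝ, and define ψ(y) = Φ(β·y − b) on ℝⁿ, where Φ is the continuous piecewise linear function with Φ(0) = 0 and slope k on [2π(k−1), 2πk]. Then ψ is convex on ℝⁿ, and y ↦ Φ(β·y − b) + ((b−π)/(2π))(β·y) − (β·y)²/(4π) is invariant under y ↦ y + λ for all λ ∈ ℝⁿ with β·λ ∈ 2πℤ. -/
private lemma phi_node (Φ : ℝ → ℝ) (h0 : Φ 0 = 0)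
    (hslope : ∀ k : ℤ, ∀ t ∈ Set.Icc (2 * Real.pi * ((k : ℝ) - 1)) (2 * Real.pi * (k : ℝ)),
      Φ t = Φ (2 * Real.pi * ((k : ℝ) - 1)) + (k : ℝ) * (t - 2 * Real.pi * ((k : ℝ) - 1))) :
    ∀ m : ℤ, Φ (2 * Real.pi * (m : ℝ)) = Real.pi * (m : ℝ) * ((m : ℝ) + 1) := by
  intro m
  induction m using Int.induction_on with
  | zero => simpa using h0
  | succ n ih =>
      have h := hslope ((n : ℤ) + 1) (2 * Real.pi * ((n : ℝ) + 1))
        ⟨by push_cast; nlinarith [Real.pi_pos], by push_cast; nlinarith [Real.pi_pos]⟩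
      push_cast at h ih ⊢
      have e1 : (2 * Real.pi * (((n : ℝ) + 1) - 1)) = 2 * Real.pi * (n : ℝ) := by ring
      rw [e1] at h
      rw [h, ih]; ring
  | pred n ih =>
      have h := hslope (-(n : ℤ)) (2 * Real.pi * (-(n : ℝ)))
        ⟨by push_cast; nlinarith [Real.pi_pos], by push_cast; nlinarith [Real.pi_pos]⟩
      push_cast at h ih ⊢
      have e1 : (2 * Real.pi * ((-(n : ℝ)) - 1)) = 2 * Real.pi * (-(n : ℝ) - 1) := by ring
      rw [e1] at h
      linarith [h, ih]

private lemma phi_eq (Φ : ℝ → ℝ) (h0 : Φ 0 = 0)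
    (hslope : ∀ k : ℤ, ∀ t ∈ Set.Icc (2 * Real.pi * ((k : ℝ) - 1)) (2 * Real.pi * (k : ℝ)),
      Φ t = Φ (2 * Real.pi * ((k : ℝ) - 1)) + (k : ℝ) * (t - 2 * Real.pi * ((k : ℝ) - 1)))
    (k : ℤ) (t : ℝ) (h1 : 2 * Real.pi * ((k : ℝ) - 1) ≤ t) (h2 : t ≤ 2 * Real.pi * (k : ℝ)) :
    Φ t = (k : ℝ) * t - Real.pi * (k : ℝ) * ((k : ℝ) - 1) := by
  have hnode := phi_node Φ h0 hslope (k - 1)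
  push_cast at hnode
  rw [hslope k t ⟨h1, h2⟩, hnode]
  ring

private lemma exists_interval (t : ℝ) :
    ∃ k : ℤ, 2 * Real.pi * ((k : ℝ) - 1) ≤ t ∧ t ≤ 2 * Real.pi * (k : ℝ) := by
  have hπ : (0 : ℝ) < 2 * Real.pi := by nlinarith [Real.pi_pos]
  refine ⟨⌈t / (2 * Real.pi)⌉, ?_, ?_⟩
  · have := Int.ceil_lt_add_one (t / (2 * Real.pi))
    rw [← sub_lt_iff_lt_add] at this
    have := (mul_lt_mul_iff_right₀ hπ).2 this
    rw [mul_div_cancel₀ _ (ne_of_gt hπ)] at this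
    linarith
  · have := Int.le_ceil (t / (2 * Real.pi))
    have := (mul_le_mul_iff_right₀ hπ).2 this
    rw [mul_div_cancel₀ _ (ne_of_gt hπ)] at this
    linarith

private lemma phi_ge (Φ : ℝ → ℝ) (h0 : Φ 0 = 0)
    (hslope : ∀ k : ℤ, ∀ t ∈ Set.Icc (2 * Real.pi * ((k : ℝ) - 1)) (2 * Real.pi * (k : ℝ)),
      Φ t = Φ (2 * Real.pi * ((k : ℝ) - 1)) + (k : ℝ) * (t - 2 * Real.pi * ((k : ℝ) - 1)))
    (k : ℤ) (t : ℝ) :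
    (k : ℝ) * t - Real.pi * (k : ℝ) * ((k : ℝ) - 1) ≤ Φ t := by
  obtain ⟨j, hj1, hj2⟩ := exists_interval t
  rw [phi_eq Φ h0 hslope j t hj1 hj2]
  rcases le_or_gt k j with hle | hlt
  · rcases eq_or_lt_of_le hle with heq | hlt'
    · subst heq; exact le_rfl
    · have hK : (k : ℝ) + 1 ≤ (j : ℝ) := by exact_mod_cast Int.add_one_le_iff.2 hlt'
      have h3 : 0 ≤ ((j : ℝ) - (k : ℝ)) * (t - Real.pi * ((j : ℝ) + (k : ℝ) - 1)) :=
        mul_nonneg (by linarith) (by nlinarith [Real.pi_pos])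
      nlinarith [h3]
  · have hK : (j : ℝ) + 1 ≤ (k : ℝ) := by exact_mod_cast Int.add_one_le_iff.2 hlt
    have h3 : 0 ≤ ((j : ℝ) - (k : ℝ)) * (t - Real.pi * ((j : ℝ) + (k : ℝ) - 1)) :=
      mul_nonneg_of_nonpos_of_nonpos (by linarith) (by nlinarith [Real.pi_pos])
    nlinarith [h3]

/-- With `Φ` the continuous piecewise linear function with `Φ 0 = 0` and slope
`k` on `[2π(k-1), 2πk]`, `β ∈ ℤⁿ` nonzero and `b ∈ ℝ`, the function `y ↦ Φ(β·y - b)` is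
convex on `ℝⁿ`, and `y ↦ Φ(β·y - b) + ((b-π)/(2π))(β·y) - (β·y)²/(4π)` is invariant under
`y ↦ y + λ` whenever `β·λ ∈ 2πℤ`. -/
theorem stmt_18 (Φ : ℝ → ℝ) (hcont : Continuous Φ) (h0 : Φ 0 = 0)
    (hslope : ∀ k : ℤ, ∀ t ∈ Set.Icc (2 * Real.pi * ((k : ℝ) - 1)) (2 * Real.pi * (k : ℝ)),
      Φ t = Φ (2 * Real.pi * ((k : ℝ) - 1)) + (k : ℝ) * (t - 2 * Real.pi * ((k : ℝ) - 1)))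
    (n : ℕ) (β : Fin n → ℤ) (hβ : β ≠ 0) (b : ℝ) :
    ConvexOn ℝ Set.univ (fun y : Fin n → ℝ => Φ ((∑ i, (β i : ℝ) * y i) - b)) ∧
    ∀ y l : Fin n → ℝ, (∃ m : ℤ, ∑ i, (β i : ℝ) * l i = 2 * Real.pi * (m : ℝ)) →
      Φ ((∑ i, (β i : ℝ) * (y + l) i) - b)
          + (b - Real.pi) / (2 * Real.pi) * (∑ i, (β i : ℝ) * (y + l) i)
          - (∑ i, (β i : ℝ) * (y + l) i) ^ 2 / (4 * Real.pi)
        = Φ ((∑ i, (β i : ℝ) * y i) - b)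
          + (b - Real.pi) / (2 * Real.pi) * (∑ i, (β i : ℝ) * y i)
          - (∑ i, (β i : ℝ) * y i) ^ 2 / (4 * Real.pi) := by
  constructor
  · refine ⟨convex_univ, fun x _ y _ a c ha hc hac => ?_⟩
    have hS : ∑ i, (β i : ℝ) * (a • x + c • y) i
        = a * (∑ i, (β i : ℝ) * x i) + c * (∑ i, (β i : ℝ) * y i) := by
      rw [Finset.mul_sum, Finset.mul_sum, ← Finset.sum_add_distrib]
      refine Finset.sum_congr rfl fun i _ => ?_
      simp [Pi.add_apply, Pi.smul_apply, smul_eq_mul]; ring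
    simp only [hS]
    set u := (∑ i, (β i : ℝ) * x i) - b with hu
    set v := (∑ i, (β i : ℝ) * y i) - b with hv
    have hs : a * (∑ i, (β i : ℝ) * x i) + c * (∑ i, (β i : ℝ) * y i) - b
        = a * u + c * v := by rw [hu, hv]; linear_combination b * hac
    rw [hs]
    obtain ⟨k, hk1, hk2⟩ := exists_interval (a * u + c * v)
    rw [phi_eq Φ h0 hslope k _ hk1 hk2]
    have h1 := mul_le_mul_of_nonneg_left (phi_ge Φ h0 hslope k u) ha
    have h2 := mul_le_mul_of_nonneg_left (phi_ge Φ h0 hslope k v) hc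
    have key : (k : ℝ) * (a * u + c * v) - Real.pi * k * (k - 1)
        = a * ((k : ℝ) * u - Real.pi * k * (k - 1))
          + c * ((k : ℝ) * v - Real.pi * k * (k - 1)) := by
      linear_combination (Real.pi * (k : ℝ) * ((k : ℝ) - 1)) * hac
    simp only [smul_eq_mul]
    linarith [h1, h2, key.le, key.ge]
  · rintro y l ⟨m, hm⟩
    have hS : ∑ i, (β i : ℝ) * (y + l) i
        = (∑ i, (β i : ℝ) * y i) + 2 * Real.pi * (m : ℝ) := by
      rw [← hm, ← Finset.sum_add_distrib]
      refine Finset.sum_congr rfl fun i _ => ?_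
      simp [Pi.add_apply]; ring
    rw [hS]
    set t := (∑ i, (β i : ℝ) * y i) - b with ht
    have harg : (∑ i, (β i : ℝ) * y i) + 2 * Real.pi * (m : ℝ) - b
        = t + 2 * Real.pi * (m : ℝ) := by rw [ht]; ring
    rw [harg]
    obtain ⟨k, hk1, hk2⟩ := exists_interval t
    have hk1' : 2 * Real.pi * (((k + m : ℤ) : ℝ) - 1) ≤ t + 2 * Real.pi * (m : ℝ) := by
      push_cast; linarith
    have hk2' : t + 2 * Real.pi * (m : ℝ) ≤ 2 * Real.pi * ((k + m : ℤ) : ℝ) := by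
      push_cast; linarith
    rw [phi_eq Φ h0 hslope (k + m) _ hk1' hk2', phi_eq Φ h0 hslope k t hk1 hk2, ht]
    push_cast
    have hπ : Real.pi ≠ 0 := Real.pi_ne_zero
    field_simp
    ring
end
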